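/- Or-to-If holds in certainty-preserving (non-falsity-preserving) inference but fails in uncertain inference: (i) for all a, b ∈ {0,1/2,1}, if f∨'(f¬(a), b) ≥ 1/2 then f→(a,b) ≥ 1/2; but (ii) there exist a, b ∈ {0,1/2,1} (indeed bivalent a,b can be chosen together with a probability distribution over two worlds) such that the pointwise inequality f∨'(f¬(a), b) ≤ f→(a,b) fails, i.e., there exist a,b with f∨'(f¬(a),b) = 1 and f→(a,b) = 1/2. -/

import Mathlib

/-!
When `a = 0` the Cooper conditional takes the designated value `1/2`; otherwise it equals `b`,
and `b = 0` is excluded because `¬a ≠ 1` would make the quasi-disjunction `0`. Pointwise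
inequality fails at `a = 0, b = 1`: the disjunction is true while the conditional is void.
-/

/-- The set of trivalent truth values {0, 1/2, 1} inside ℚ. -/
def Tri (x : ℚ) : Prop := x = 0 ∨ x = 1/2 ∨ x = 1

/-- Cooper conditional: f→(0,y)=1/2, f→(1,y)=y, f→(1/2,y)=y (on trivalent values). -/
def tcond (a b : ℚ) : ℚ := if a = 0 then 1/2 else b

/-- Quasi-conjunction. -/
def tand (a b : ℚ) : ℚ :=
  if a = 0 ∨ b = 0 then 0 else if a = 1 ∨ b = 1 then 1 else 1/2

/-- Quasi-disjunction. -/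
def tor (a b : ℚ) : ℚ :=
  if a = 1 ∨ b = 1 then 1 else if a = 0 ∨ b = 0 then 0 else 1/2

/-- Strong Kleene negation. -/
def tneg (a : ℚ) : ℚ := 1 - a

theorem Tri.half_le_of_ne_zero {x : ℚ} (hx : Tri x) (h0 : x ≠ 0) : 1/2 ≤ x := by
  rcases hx with rfl | rfl | rfl
  · exact absurd rfl h0
  all_goals norm_num

theorem tneg_eq_one_iff {a : ℚ} : tneg a = 1 ↔ a = 0 := by
  simp [tneg]

theorem tor_one_right (x : ℚ) : tor x 1 = 1 := by
  simp [tor]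

theorem tor_zero_right {x : ℚ} (hx : x ≠ 1) : tor x 0 = 0 := by
  simp [tor, hx]

theorem tcond_zero_left (b : ℚ) : tcond 0 b = 1/2 := by
  simp [tcond]

theorem tcond_of_ne_zero {a : ℚ} (b : ℚ) (ha : a ≠ 0) : tcond a b = b := by
  simp [tcond, ha]

theorem half_le_tcond_of_half_le_tor {a b : ℚ} (hb : Tri b) (h : 1/2 ≤ tor (tneg a) b) :
    1/2 ≤ tcond a b := by
  by_cases ha : a = 0
  · rw [ha, tcond_zero_left]
  rw [tcond_of_ne_zero b ha]
  refine hb.half_le_of_ne_zero ?_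
  rintro rfl
  rw [tor_zero_right (mt tneg_eq_one_iff.mp ha)] at h
  norm_num at h

/-- Or-to-If holds in certainty-preserving inference (designated value preservation)
but fails pointwise in uncertain inference. -/
theorem or_to_if :
    (∀ a b : ℚ, Tri a → Tri b → 1/2 ≤ tor (tneg a) b → 1/2 ≤ tcond a b) ∧
    (∃ a b : ℚ, Tri a ∧ Tri b ∧ tor (tneg a) b = 1 ∧ tcond a b = 1/2) :=
  ⟨fun _ _ _ hb h => half_le_tcond_of_half_le_tor hb h,
    ⟨0, 1, Or.inl rfl, Or.inr (Or.inr rfl), tor_one_right _, tcond_zero_left 1⟩⟩
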